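/- arXiv:2512.12127 — 2 statements merged into one kernel-verified Lean document; each statement's English description precedes it below -/
import Mathlib

section
/- Let n ≥ 1 and let h be an entropy vector (a function from subsets of [n] to ℝ ∪ {∞} with h_∅ = 0), with entropy polynomial φ_h. Then for every v ∈ ℝ^n the following are equivalent: (i) for every j ∈ [n] there exists J ⊆ [n] with j ∈ J, h_J ≠ ∞ and φ_h(v) = Σ_{i∈J} v_i − h_J (i.e. v ∈ |Σ_h|); (ii) for every j ∈ [n] and every real t > 0, φ_h(v + t e_j) = φ_h(v) + t, where e_j is the j-th standard basis vector of ℝ^n. -/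
open scoped Classical

noncomputable section

/-- The entropy polynomial of an entropy vector `h` (a function from subsets of `[n]` to
`ℝ ∪ {∞}` with `h_∅ = 0`): `φ_h(v) = max { Σ_{j ∈ J} v_j − h_J : J ⊆ [n], h_J ≠ ∞ }`. -/
def entPoly {n : ℕ} (h : Finset (Fin n) → WithTop ℝ) (v : Fin n → ℝ) : ℝ :=
  sSup {x : ℝ | ∃ J : Finset (Fin n), h J ≠ ⊤ ∧ x = ∑ j ∈ J, v j - (h J).untopD 0}

private lemma entPoly_spec {n : ℕ} (h : Finset (Fin n) → WithTop ℝ) (h0 : h ∅ = 0)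
    (v : Fin n → ℝ) :
    (∃ J : Finset (Fin n), h J ≠ ⊤ ∧ entPoly h v = ∑ j ∈ J, v j - (h J).untopD 0) ∧
    (∀ J : Finset (Fin n), h J ≠ ⊤ → ∑ j ∈ J, v j - (h J).untopD 0 ≤ entPoly h v) := by
  set S := {x : ℝ | ∃ J : Finset (Fin n), h J ≠ ⊤ ∧ x = ∑ j ∈ J, v j - (h J).untopD 0} with hSdef
  have hS : S = (fun J : Finset (Fin n) => ∑ j ∈ J, v j - (h J).untopD 0) '' {J | h J ≠ ⊤} := by
    ext x
    simp only [hSdef, Set.mem_setOf_eq, Set.mem_image]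
    constructor
    · rintro ⟨J, hJ, rfl⟩; exact ⟨J, hJ, rfl⟩
    · rintro ⟨J, hJ, rfl⟩; exact ⟨J, hJ, rfl⟩
  have hfin : S.Finite := hS ▸ (Set.toFinite _).image _
  have hne : S.Nonempty := ⟨0, ∅, by simp [h0]⟩
  have hmem : sSup S ∈ S := hne.csSup_mem hfin
  have hent : entPoly h v = sSup S := rfl
  constructor
  · obtain ⟨J, hJ, hx⟩ := hmem
    exact ⟨J, hJ, hent ▸ hx⟩
  · intro J hJ
    rw [hent]
    exact le_csSup hfin.bddAbove ⟨J, hJ, rfl⟩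

private lemma sum_shift {n : ℕ} (v : Fin n → ℝ) (j : Fin n) (t : ℝ) (J : Finset (Fin n)) :
    ∑ i ∈ J, ((v + Pi.single j t : Fin n → ℝ)) i = ∑ i ∈ J, v i + (if j ∈ J then t else 0) := by
  simp only [Pi.add_apply]
  rw [Finset.sum_add_distrib]
  congr 1
  simp [Finset.sum_pi_single']

/-- **Characterization of the saturated set `|Σ_h|` (Lemma 2.3).** For an entropy vector
`h` with `h_∅ = 0` and `v ∈ ℝ^n`, the following are equivalent: (i) for every `j` there
is a `J ∋ j` with `h_J ≠ ∞` attaining `φ_h(v)`; (ii) for every `j` and every `t > 0`,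
`φ_h(v + t e_j) = φ_h(v) + t`. -/
theorem inSigma_iff_directional_increase
    {n : ℕ} (hn : 1 ≤ n) (h : Finset (Fin n) → WithTop ℝ) (h0 : h ∅ = 0)
    (v : Fin n → ℝ) :
    (∀ j : Fin n, ∃ J : Finset (Fin n), j ∈ J ∧ h J ≠ ⊤ ∧
        entPoly h v = ∑ i ∈ J, v i - (h J).untopD 0) ↔
      (∀ (j : Fin n) (t : ℝ), 0 < t →
        entPoly h (v + Pi.single j t) = entPoly h v + t) := by
  constructor
  · intro H j t ht
    obtain ⟨J, hjJ, hJ, heq⟩ := H j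
    have spec := entPoly_spec h h0 (v + Pi.single j t)
    have spec0 := entPoly_spec h h0 v
    apply le_antisymm
    · obtain ⟨J', hJ', hx⟩ := spec.1
      rw [hx, sum_shift]
      have h1 : ∑ i ∈ J', v i - (h J').untopD 0 ≤ entPoly h v := spec0.2 J' hJ'
      have h2 : (if j ∈ J' then t else 0) ≤ t := by split <;> linarith
      linarith
    · have := spec.2 J hJ
      rw [sum_shift, if_pos hjJ] at this
      linarith [heq]
  · intro H j
    have key := H j 1 one_pos
    obtain ⟨J, hJ, hx⟩ := (entPoly_spec h h0 (v + Pi.single j 1)).1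
    rw [sum_shift] at hx
    have hjJ : j ∈ J := by
      by_contra hc
      rw [if_neg hc, add_zero] at hx
      have := (entPoly_spec h h0 v).2 J hJ
      rw [← hx, key] at this
      linarith
    rw [if_pos hjJ] at hx
    rw [key] at hx
    exact ⟨J, hjJ, hJ, by linarith⟩

end
end

section
/- Let n ≥ 1 and let h be any function from subsets of [n] to ℝ ∪ {∞} with h_∅ = 0, with entropy polynomial φ_h(x) := max over J ⊆ [n] with h_J ≠ ∞ of (Σ_{j∈J} x_j − h_J). Suppose there exist a real number α > 0 and a Borel probability measure μ on ℝ^n such that for every x ∈ ℝ^n, μ({y ∈ ℝ^n : y_i ≥ x_i for all i}) = exp(−α φ_h(x)). Then h is supermodular: for all subsets I, J ⊆ [n], h_I + h_J ≤ h_{I∩J} + h_{I∪J} (inequality in ℝ ∪ {∞}, with the convention a + ∞ = ∞ and a ≤ ∞ for all a). -/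
open scoped Classical

noncomputable section

open MeasureTheory

namespace SurvSuper

variable {n : ℕ} (h : Finset (Fin n) → WithTop ℝ)

def hre (K : Finset (Fin n)) : ℝ := (h K).untopD 0

lemma coe_hre {K : Finset (Fin n)} (hK : h K ≠ ⊤) : ((hre h K : ℝ) : WithTop ℝ) = h K := by
  unfold hre
  lift h K to ℝ using hK with r
  simp

lemma entPoly_bdd (v : Fin n → ℝ) :
    BddAbove {x : ℝ | ∃ J : Finset (Fin n), h J ≠ ⊤ ∧ x = ∑ j ∈ J, v j - (h J).untopD 0} := by
  apply Set.Finite.bddAbove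
  apply (Set.finite_range (fun J : Finset (Fin n) => ∑ j ∈ J, v j - (h J).untopD 0)).subset
  rintro x ⟨J, _, rfl⟩
  exact ⟨J, rfl⟩

lemma le_entPoly {K : Finset (Fin n)} (hK : h K ≠ ⊤) (v : Fin n → ℝ) :
    ∑ j ∈ K, v j - hre h K ≤ entPoly h v :=
  le_csSup (entPoly_bdd h v) ⟨K, hK, rfl⟩

lemma entPoly_le (h0 : h ∅ = 0) {v : Fin n → ℝ} {D : ℝ}
    (hD : ∀ K, h K ≠ ⊤ → ∑ j ∈ K, v j - hre h K ≤ D) : entPoly h v ≤ D := by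
  apply csSup_le
  · exact ⟨0 - (h ∅).untopD 0, ∅, by simp [h0], by simp⟩
  · rintro x ⟨J, hJ, rfl⟩
    exact hD J hJ

def Hb : ℝ := ∑ K : Finset (Fin n), |hre h K|

lemma abs_hre_le (K : Finset (Fin n)) : |hre h K| ≤ Hb h :=
  Finset.single_le_sum (f := fun K => |hre h K|) (fun _ _ => abs_nonneg _) (Finset.mem_univ K)

lemma Hb_nonneg : 0 ≤ Hb h := Finset.sum_nonneg fun _ _ => abs_nonneg _

def vec4 (C A B : Finset (Fin n)) (a b c M : ℝ) : Fin n → ℝ :=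
  fun k => if k ∈ C then a else if k ∈ A then b else if k ∈ B then c else -M

lemma vec4_inf (C A B : Finset (Fin n)) (a b b' c c' M : ℝ) :
    vec4 C A B a b c M ⊓ vec4 C A B a b' c' M = vec4 C A B a (min b b') (min c c') M := by
  funext k
  show min _ _ = _
  unfold vec4
  split_ifs <;> simp

lemma vec4_sup (C A B : Finset (Fin n)) (a b b' c c' M : ℝ) :
    vec4 C A B a b c M ⊔ vec4 C A B a b' c' M = vec4 C A B a (max b b') (max c c') M := by
  funext k
  show max _ _ = _
  unfold vec4
  split_ifs <;> simp

lemma sum_vec4 {C A B : Finset (Fin n)} (hCA : Disjoint C A) (hCB : Disjoint C B)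
    (hAB : Disjoint A B) (a b c M : ℝ) (K : Finset (Fin n)) :
    ∑ j ∈ K, vec4 C A B a b c M j =
      a * ((K ∩ C).card : ℝ) + b * ((K ∩ A).card : ℝ) + c * ((K ∩ B).card : ℝ)
        - M * (((K \ (C ∪ A ∪ B)).card : ℝ)) := by
  have key : ∀ j ∈ K, vec4 C A B a b c M j =
      a * (if j ∈ C then (1:ℝ) else 0) + b * (if j ∈ A then (1:ℝ) else 0)
        + c * (if j ∈ B then (1:ℝ) else 0) - M * (if j ∈ C ∪ A ∪ B then (0:ℝ) else 1) := by
    intro j _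
    unfold vec4
    by_cases h1 : j ∈ C
    · have h2 : j ∉ A := fun hj => (Finset.disjoint_left.mp hCA) h1 hj
      have h3 : j ∉ B := fun hj => (Finset.disjoint_left.mp hCB) h1 hj
      simp [h1, h2, h3]
    · by_cases h2 : j ∈ A
      · have h3 : j ∉ B := fun hj => (Finset.disjoint_left.mp hAB) h2 hj
        simp [h1, h2, h3]
      · by_cases h3 : j ∈ B
        · simp [h1, h2, h3]
        · simp [h1, h2, h3]
  rw [Finset.sum_congr rfl key]
  have hind : ∀ T : Finset (Fin n), ∑ j ∈ K, (if j ∈ T then (1:ℝ) else 0) = ((K ∩ T).card : ℝ) := by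
    intro T
    rw [Finset.sum_ite_mem]
    simp
  have hout : ∑ j ∈ K, (if j ∈ C ∪ A ∪ B then (0:ℝ) else 1) = ((K \ (C ∪ A ∪ B)).card : ℝ) := by
    rw [Finset.sum_ite, Finset.sum_const, Finset.sum_const]
    have : K.filter (fun j => j ∉ C ∪ A ∪ B) = K \ (C ∪ A ∪ B) := by
      rw [Finset.sdiff_eq_filter]
    rw [← this]
    simp only [Finset.mem_union]
    push_neg
    simp
  simp only [Finset.sum_sub_distrib, Finset.sum_add_distrib, ← Finset.mul_sum]
  rw [hind, hind, hind, hout]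

lemma rect {α : ℝ} {μ : Measure (Fin n → ℝ)}
    (hsurv : ∀ x : Fin n → ℝ,
      μ {y : Fin n → ℝ | ∀ i, x i ≤ y i} =
        ENNReal.ofReal (Real.exp (-(α * entPoly h x)))) (x1 x2 : Fin n → ℝ) :
    Real.exp (-(α * entPoly h x1)) + Real.exp (-(α * entPoly h x2)) ≤
      Real.exp (-(α * entPoly h (x1 ⊓ x2))) + Real.exp (-(α * entPoly h (x1 ⊔ x2))) := by
  set S : (Fin n → ℝ) → Set (Fin n → ℝ) := fun x => {y | ∀ i, x i ≤ y i} with hS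
  have hmeas : ∀ x, MeasurableSet (S x) := by
    intro x
    have : S x = ⋂ i, {y : Fin n → ℝ | x i ≤ y i} := by
      ext y; simp [hS, Set.mem_iInter]
    rw [this]
    exact MeasurableSet.iInter fun i =>
      measurableSet_le measurable_const (measurable_pi_apply i)
  have hsub : S x1 ∪ S x2 ⊆ S (x1 ⊓ x2) := by
    rintro y (hy | hy) i
    · exact le_trans inf_le_left (hy i)
    · exact le_trans inf_le_right (hy i)
  have hcap : S x1 ∩ S x2 = S (x1 ⊔ x2) := by
    ext y
    simp only [hS, Set.mem_inter_iff, Set.mem_setOf_eq]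
    constructor
    · rintro ⟨h1, h2⟩ i
      exact sup_le (h1 i) (h2 i)
    · intro hy
      exact ⟨fun i => le_trans le_sup_left (hy i), fun i => le_trans le_sup_right (hy i)⟩
  have hmain : μ (S x1) + μ (S x2) ≤ μ (S (x1 ⊓ x2)) + μ (S (x1 ⊔ x2)) := by
    rw [← measure_union_add_inter (S x1) (hmeas x2)]
    exact add_le_add (measure_mono hsub) (le_of_eq (by rw [hcap]))
  rw [hsurv x1, hsurv x2, hsurv (x1 ⊓ x2), hsurv (x1 ⊔ x2),
    ← ENNReal.ofReal_add (Real.exp_nonneg _) (Real.exp_nonneg _),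
    ← ENNReal.ofReal_add (Real.exp_nonneg _) (Real.exp_nonneg _)] at hmain
  exact (ENNReal.ofReal_le_ofReal_iff (add_nonneg (Real.exp_nonneg _) (Real.exp_nonneg _))).mp hmain

lemma exp_antitone {α X Y : ℝ} (hα : 0 ≤ α) (hXY : X ≤ Y) :
    Real.exp (-(α * Y)) ≤ Real.exp (-(α * X)) := by
  apply Real.exp_le_exp.mpr
  have := mul_le_mul_of_nonneg_left hXY hα
  linarith

lemma up {α : ℝ} {μ : Measure (Fin n → ℝ)} (h0 : h ∅ = 0) (hα : 0 < α)
    (hsurv : ∀ x : Fin n → ℝ,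
      μ {y : Fin n → ℝ | ∀ i, x i ≤ y i} =
        ENNReal.ofReal (Real.exp (-(α * entPoly h x))))
    {C U : Finset (Fin n)} {i : Fin n}
    (hiC : i ∉ C) (hsub : insert i C ⊆ U) (hCfin : h C ≠ ⊤) (hUfin : h U ≠ ⊤) :
    h (insert i C) ≠ ⊤ := by
  by_contra htop
  have hH0 : 0 ≤ Hb h := Hb_nonneg h
  set Hh : ℝ := Hb h with hHh
  set b : ℝ := 2 * Hh + 1 with hb
  set a : ℝ := b + 2 * Hh + 1 with ha
  set M : ℝ := n * a + b + 2 * Hh + 1 with hM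
  have hb0 : 0 < b := by rw [hb]; linarith
  have ha0 : 0 < a := by rw [ha, hb]; linarith
  have hn0 : (0:ℝ) ≤ (n:ℝ) := Nat.cast_nonneg n
  have hna : (0:ℝ) ≤ (n:ℝ) * a := mul_nonneg hn0 (by linarith)
  have hM0 : 0 ≤ M := by rw [hM]; linarith
  set B : Finset (Fin n) := U \ insert i C with hB
  set p : ℝ := (C.card : ℝ) with hp
  have hp0 : 0 ≤ p := by rw [hp]; exact Nat.cast_nonneg _
  have hpn : p ≤ (n : ℝ) := by
    have h1 : C.card ≤ n := by simpa using Finset.card_le_univ C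
    rw [hp]
    exact_mod_cast h1
  have dCA : Disjoint C ({i} : Finset (Fin n)) := by
    simp [Finset.disjoint_singleton_right, hiC]
  have dIB : Disjoint (insert i C) B := Finset.disjoint_sdiff
  have dCB : Disjoint C B := dIB.mono_left (Finset.subset_insert i C)
  have dAB : Disjoint ({i} : Finset (Fin n)) B :=
    dIB.mono_left (by simp)
  have hUeq : C ∪ {i} ∪ B = U := by
    apply subset_antisymm
    · apply Finset.union_subset
      · apply Finset.union_subset
        · exact (Finset.subset_insert i C).trans hsub
        · simpa using hsub (Finset.mem_insert_self i C)
      · exact Finset.sdiff_subset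
    · intro u hu
      by_cases hu' : u ∈ insert i C
      · rcases Finset.mem_insert.mp hu' with rfl | hc
        · simp
        · simp [hc]
      · simp [hB, Finset.mem_sdiff, hu, hu']
  -- generic bound facts for a set K
  have cardfacts : ∀ K : Finset (Fin n),
      ((K ∩ C).card : ℝ) ≤ p ∧ ((K ∩ {i}).card : ℝ) ≤ 1 := by
    intro K
    constructor
    · rw [hp]
      exact_mod_cast Finset.card_le_card (Finset.inter_subset_right)
    · have : (K ∩ {i}).card ≤ ({i} : Finset (Fin n)).card :=
        Finset.card_le_card (Finset.inter_subset_right)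
      simpa using this
  set x1 := vec4 C {i} B a b (-M) M with hx1
  set x2 := vec4 C {i} B a (-M) 0 M with hx2
  have hinf : x1 ⊓ x2 = vec4 C {i} B a (-M) (-M) M := by
    have m1 : min b (-M) = -M := min_eq_right (by linarith)
    have m2 : min (-M) (0:ℝ) = -M := min_eq_left (by linarith)
    rw [hx1, hx2, vec4_inf, m1, m2]
  have hsup : x1 ⊔ x2 = vec4 C {i} B a b 0 M := by
    have m1 : max b (-M) = b := max_eq_left (by linarith)
    have m2 : max (-M) (0:ℝ) = 0 := max_eq_right (by linarith)
    rw [hx1, hx2, vec4_sup, m1, m2]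
  -- bound on φ1
  have bound1 : entPoly h x1 ≤ a * p - hre h C := by
    apply entPoly_le h h0
    intro K hK
    rw [hx1, sum_vec4 dCA dCB dAB]
    obtain ⟨hmC, hmA⟩ := cardfacts K
    have habsK : |hre h K| ≤ Hh := abs_hre_le h K
    have habsC : |hre h C| ≤ Hh := abs_hre_le h C
    have hmA0 : (0:ℝ) ≤ ((K ∩ {i}).card : ℝ) := Nat.cast_nonneg _
    have hmB0 : (0:ℝ) ≤ ((K ∩ B).card : ℝ) := Nat.cast_nonneg _
    have hr0 : (0:ℝ) ≤ ((K \ (C ∪ {i} ∪ B)).card : ℝ) := Nat.cast_nonneg _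
    have hmC0 : (0:ℝ) ≤ ((K ∩ C).card : ℝ) := Nat.cast_nonneg _
    rw [abs_le] at habsK habsC
    by_cases hKsub : K ⊆ insert i C
    · have hKB : K ∩ B = ∅ := by
        apply Finset.eq_empty_of_forall_notMem
        intro k hk
        rcases Finset.mem_inter.mp hk with ⟨hk1, hk2⟩
        exact (Finset.disjoint_left.mp dIB) (hKsub hk1) hk2
      have hKr : K \ (C ∪ {i} ∪ B) = ∅ := by
        apply Finset.eq_empty_of_forall_notMem
        intro k hk
        rcases Finset.mem_sdiff.mp hk with ⟨hk1, hk2⟩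
        apply hk2
        rcases Finset.mem_insert.mp (hKsub hk1) with rfl | hc
        · simp
        · simp [hc]
      rw [hKB, hKr]
      simp only [Finset.card_empty, Nat.cast_zero, mul_zero, sub_zero]
      by_cases hCK : C ⊆ K
      · by_cases hiK : i ∈ K
        · exfalso
          have : K = insert i C :=
            subset_antisymm hKsub (Finset.insert_subset hiK hCK)
          rw [this] at hK
          exact hK htop
        · have hKC : K = C := by
            apply subset_antisymm _ hCK
            intro k hk
            rcases Finset.mem_insert.mp (hKsub hk) with rfl | hc
            · exact absurd hk hiK
            · exact hc
          subst hKC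
          have h1 : K ∩ K = K := Finset.inter_self K
          have h2 : K ∩ ({i} : Finset (Fin n)) = ∅ := by
            apply Finset.eq_empty_of_forall_notMem
            intro k hk
            rcases Finset.mem_inter.mp hk with ⟨hk1, hk2⟩
            rw [Finset.mem_singleton] at hk2
            subst hk2
            exact hiK hk1
          rw [h1, h2]
          simp [hp]
      · have hlt : (K ∩ C).card < C.card := by
          apply Finset.card_lt_card
          constructor
          · exact Finset.inter_subset_right
          · intro hsub2
            exact hCK fun c hc => (Finset.mem_inter.mp (hsub2 hc)).1
        have hmC1 : ((K ∩ C).card : ℝ) + 1 ≤ p := by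
          rw [hp]; exact_mod_cast hlt
        have e1 : a * ((K ∩ C).card : ℝ) ≤ a * (p - 1) :=
          mul_le_mul_of_nonneg_left (by linarith) ha0.le
        have e2 : b * ((K ∩ {i}).card : ℝ) ≤ b * 1 :=
          mul_le_mul_of_nonneg_left hmA hb0.le
        linarith
    · -- some element of K escapes insert i C
      obtain ⟨k, hkK, hkI⟩ := Finset.not_subset.mp hKsub
      have hone : 1 ≤ ((K ∩ B).card : ℝ) + ((K \ (C ∪ {i} ∪ B)).card : ℝ) := by
        by_cases hkB : k ∈ B
        · have : 0 < (K ∩ B).card :=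
            Finset.card_pos.mpr ⟨k, Finset.mem_inter.mpr ⟨hkK, hkB⟩⟩
          have : (1:ℝ) ≤ ((K ∩ B).card : ℝ) := by exact_mod_cast this
          linarith
        · have hmem : k ∈ K \ (C ∪ {i} ∪ B) := by
            rw [Finset.mem_sdiff]
            refine ⟨hkK, ?_⟩
            intro hc
            rcases Finset.mem_union.mp hc with hc1 | hc2
            · rcases Finset.mem_union.mp hc1 with hc3 | hc4
              · exact hkI (Finset.mem_insert_of_mem hc3)
              · rw [Finset.mem_singleton] at hc4
                subst hc4
                exact hkI (Finset.mem_insert_self _ _)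
            · exact hkB hc2
          have : 0 < (K \ (C ∪ {i} ∪ B)).card := Finset.card_pos.mpr ⟨k, hmem⟩
          have : (1:ℝ) ≤ ((K \ (C ∪ {i} ∪ B)).card : ℝ) := by exact_mod_cast this
          linarith
      have habsK : |hre h K| ≤ Hh := abs_hre_le h K
      have habsC : |hre h C| ≤ Hh := abs_hre_le h C
      rw [abs_le] at habsK habsC
      have e1 : a * ((K ∩ C).card : ℝ) ≤ a * p :=
        mul_le_mul_of_nonneg_left hmC ha0.le
      have e2 : b * ((K ∩ {i}).card : ℝ) ≤ b * 1 :=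
        mul_le_mul_of_nonneg_left hmA hb0.le
      have e3 : a * p ≤ a * n := mul_le_mul_of_nonneg_left hpn ha0.le
      have e4 : M * 1 ≤ M * (((K ∩ B).card : ℝ) + ((K \ (C ∪ {i} ∪ B)).card : ℝ)) :=
        mul_le_mul_of_nonneg_left hone hM0
      rw [mul_add] at e4
      linarith
  -- lower bound on φ0
  have bound0 : a * p - hre h C ≤ entPoly h (x1 ⊓ x2) := by
    rw [hinf]
    have := le_entPoly h hCfin (vec4 C {i} B a (-M) (-M) M)
    rw [sum_vec4 dCA dCB dAB] at this
    have h1 : C ∩ C = C := Finset.inter_self C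
    have h2 : C ∩ ({i} : Finset (Fin n)) = ∅ := Finset.disjoint_iff_inter_eq_empty.mp dCA
    have h3 : C ∩ B = ∅ := Finset.disjoint_iff_inter_eq_empty.mp dCB
    have h4 : C \ (C ∪ {i} ∪ B) = ∅ := by
      apply Finset.sdiff_eq_empty_iff_subset.mpr
      intro c hc
      simp [hc]
    rw [h1, h2, h3, h4] at this
    simpa [hp] using this
  -- lower bound on φ3
  have bound3 : a * p + b - hre h U ≤ entPoly h (x1 ⊔ x2) := by
    rw [hsup]
    have := le_entPoly h hUfin (vec4 C {i} B a b 0 M)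
    rw [sum_vec4 dCA dCB dAB] at this
    have h1 : U ∩ C = C := Finset.inter_eq_right.mpr ((Finset.subset_insert i C).trans hsub)
    have h2 : U ∩ ({i} : Finset (Fin n)) = {i} := by
      apply Finset.inter_eq_right.mpr
      intro k hk
      rw [Finset.mem_singleton] at hk
      rw [hk]
      exact hsub (Finset.mem_insert_self i C)
    have h4 : U \ (C ∪ {i} ∪ B) = ∅ := by
      rw [hUeq]
      exact Finset.sdiff_self U
    rw [h1, h2, h4] at this
    simp only [Finset.card_singleton, Nat.cast_one, mul_one, Finset.card_empty,
      Nat.cast_zero, mul_zero, sub_zero, zero_mul, add_zero] at this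
    simpa [hp] using this
  -- upper bound on φ2
  have bound2 : entPoly h x2 ≤ a * p + Hh := by
    apply entPoly_le h h0
    intro K hK
    rw [hx2, sum_vec4 dCA dCB dAB]
    obtain ⟨hmC, hmA⟩ := cardfacts K
    have habsK : |hre h K| ≤ Hh := abs_hre_le h K
    rw [abs_le] at habsK
    have hmA0 : (0:ℝ) ≤ ((K ∩ {i}).card : ℝ) := Nat.cast_nonneg _
    have hmB0 : (0:ℝ) ≤ ((K ∩ B).card : ℝ) := Nat.cast_nonneg _
    have hr0 : (0:ℝ) ≤ ((K \ (C ∪ {i} ∪ B)).card : ℝ) := Nat.cast_nonneg _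
    have hmC0 : (0:ℝ) ≤ ((K ∩ C).card : ℝ) := Nat.cast_nonneg _
    have e1 : a * ((K ∩ C).card : ℝ) ≤ a * p :=
      mul_le_mul_of_nonneg_left hmC ha0.le
    have e6 : 0 ≤ M * ((K ∩ {i}).card : ℝ) := mul_nonneg hM0 hmA0
    have e7 : 0 ≤ M * ((K \ (C ∪ {i} ∪ B)).card : ℝ) := mul_nonneg hM0 hr0
    linarith
  -- rectangle inequality
  have hrect := rect h hsurv x1 x2
  have hE1 : Real.exp (-(α * entPoly h (x1 ⊓ x2))) ≤ Real.exp (-(α * entPoly h x1)) :=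
    exp_antitone hα.le (le_trans bound1 bound0)
  have hE2 : Real.exp (-(α * entPoly h x2)) ≤ Real.exp (-(α * entPoly h (x1 ⊔ x2))) := by
    linarith
  have h32 : entPoly h (x1 ⊔ x2) ≤ entPoly h x2 := by
    have := Real.exp_le_exp.mp hE2
    have h' : α * entPoly h (x1 ⊔ x2) ≤ α * entPoly h x2 := by linarith
    exact (mul_le_mul_iff_right₀ hα).mp h'
  have habsU : |hre h U| ≤ Hh := abs_hre_le h U
  rw [abs_le] at habsU
  linarith

lemma vec4_comm {A B : Finset (Fin n)} (C : Finset (Fin n)) (hAB : Disjoint A B)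
    (a b c M : ℝ) : vec4 C A B a b c M = vec4 C B A a c b M := by
  funext k
  unfold vec4
  by_cases h1 : k ∈ A
  · have h2 : k ∉ B := fun hk => (Finset.disjoint_left.mp hAB) h1 hk
    simp [h1, h2]
  · by_cases h2 : k ∈ B <;> simp [h1, h2]

lemma philoc (h0 : h ∅ = 0) {S : Finset (Fin n)} {i j : Fin n}
    (hi : i ∉ S) (hj : j ∉ S) (hij : i ≠ j) {E a b c M : ℝ}
    (hE0 : 0 ≤ E) (hbE : |b| ≤ E) (hcE : |c| ≤ E)
    (haE : a = E + 2 * Hb h + 1) (hME : M = n * a + E + 2 * Hb h + 1)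
    (hbI : b + hre h S ≤ hre h (insert i S)) :
    entPoly h (vec4 S {i} {j} a b (-M) M) ≤ a * (S.card : ℝ) - hre h S := by
  have hH0 : 0 ≤ Hb h := Hb_nonneg h
  have ha0 : 0 < a := by rw [haE]; linarith
  have hn0 : (0:ℝ) ≤ (n:ℝ) := Nat.cast_nonneg n
  have hna : (0:ℝ) ≤ (n:ℝ) * a := mul_nonneg hn0 ha0.le
  have hM0 : 0 ≤ M := by rw [hME]; linarith
  set p : ℝ := (S.card : ℝ) with hp
  have hp0 : 0 ≤ p := by rw [hp]; exact Nat.cast_nonneg _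
  have hpn : p ≤ (n : ℝ) := by
    have h1 : S.card ≤ n := by simpa using Finset.card_le_univ S
    rw [hp]; exact_mod_cast h1
  have dCA : Disjoint S ({i} : Finset (Fin n)) := by
    simp [Finset.disjoint_singleton_right, hi]
  have dCB : Disjoint S ({j} : Finset (Fin n)) := by
    simp [Finset.disjoint_singleton_right, hj]
  have dAB : Disjoint ({i} : Finset (Fin n)) ({j} : Finset (Fin n)) := by
    simp only [Finset.disjoint_singleton_right, Finset.mem_singleton]
    exact fun hc => hij hc.symm
  apply entPoly_le h h0
  intro K hK
  rw [sum_vec4 dCA dCB dAB]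
  have habsK : |hre h K| ≤ Hb h := abs_hre_le h K
  have habsS : |hre h S| ≤ Hb h := abs_hre_le h S
  rw [abs_le] at habsK habsS
  have hmS : ((K ∩ S).card : ℝ) ≤ p := by
    rw [hp]; exact_mod_cast Finset.card_le_card (Finset.inter_subset_right)
  have hmi : ((K ∩ {i}).card : ℝ) ≤ 1 := by
    have : (K ∩ {i}).card ≤ ({i} : Finset (Fin n)).card :=
      Finset.card_le_card (Finset.inter_subset_right)
    simpa using this
  have hmi0 : (0:ℝ) ≤ ((K ∩ {i}).card : ℝ) := Nat.cast_nonneg _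
  have hmj0 : (0:ℝ) ≤ ((K ∩ {j}).card : ℝ) := Nat.cast_nonneg _
  have hr0 : (0:ℝ) ≤ ((K \ (S ∪ {i} ∪ {j})).card : ℝ) := Nat.cast_nonneg _
  have hmS0 : (0:ℝ) ≤ ((K ∩ S).card : ℝ) := Nat.cast_nonneg _
  have ebmi : b * ((K ∩ {i}).card : ℝ) ≤ E := by
    have e1 : b * ((K ∩ {i}).card : ℝ) ≤ |b| * ((K ∩ {i}).card : ℝ) :=
      mul_le_mul_of_nonneg_right (le_abs_self b) hmi0
    have e2 : |b| * ((K ∩ {i}).card : ℝ) ≤ |b| * 1 :=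
      mul_le_mul_of_nonneg_left hmi (abs_nonneg b)
    linarith
  by_cases hKsub : K ⊆ insert i S
  · have hjI : j ∉ insert i S := by
      simp [Finset.mem_insert, hij.symm, hj]
    have hKj : K ∩ ({j} : Finset (Fin n)) = ∅ := by
      apply Finset.eq_empty_of_forall_notMem
      intro k hk
      rcases Finset.mem_inter.mp hk with ⟨hk1, hk2⟩
      rw [Finset.mem_singleton] at hk2
      rw [hk2] at hk1
      exact hjI (hKsub hk1)
    have hKr : K \ (S ∪ {i} ∪ {j}) = ∅ := by
      apply Finset.eq_empty_of_forall_notMem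
      intro k hk
      rcases Finset.mem_sdiff.mp hk with ⟨hk1, hk2⟩
      apply hk2
      rcases Finset.mem_insert.mp (hKsub hk1) with rfl | hc
      · simp
      · simp [hc]
    rw [hKj, hKr]
    simp only [Finset.card_empty, Nat.cast_zero, mul_zero, sub_zero, neg_mul]
    by_cases hSK : S ⊆ K
    · by_cases hiK : i ∈ K
      · have hKI : K = insert i S :=
          subset_antisymm hKsub (Finset.insert_subset hiK hSK)
        have m1 : K ∩ S = S := Finset.inter_eq_right.mpr hSK
        have m2 : K ∩ ({i} : Finset (Fin n)) = {i} := by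
          apply Finset.inter_eq_right.mpr
          intro k hk
          rw [Finset.mem_singleton] at hk
          rw [hk]
          exact hiK
        rw [m1, m2, hKI]
        simp only [Finset.card_singleton, Nat.cast_one, mul_one]
        rw [← hp]
        linarith
      · have hKS : K = S := by
          apply subset_antisymm _ hSK
          intro k hk
          rcases Finset.mem_insert.mp (hKsub hk) with rfl | hc
          · exact absurd hk hiK
          · exact hc
        subst hKS
        have m1 : K ∩ K = K := Finset.inter_self K
        have m2 : K ∩ ({i} : Finset (Fin n)) = ∅ :=
          Finset.disjoint_iff_inter_eq_empty.mp (by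
            simp [Finset.disjoint_singleton_right, hiK])
        rw [m1, m2]
        simp [hp]
    · have hlt : (K ∩ S).card < S.card := by
        apply Finset.card_lt_card
        constructor
        · exact Finset.inter_subset_right
        · intro hsub2
          exact hSK fun s hs => (Finset.mem_inter.mp (hsub2 hs)).1
      have hmS1 : ((K ∩ S).card : ℝ) + 1 ≤ p := by
        rw [hp]; exact_mod_cast hlt
      have e1 : a * ((K ∩ S).card : ℝ) ≤ a * (p - 1) :=
        mul_le_mul_of_nonneg_left (by linarith) ha0.le
      linarith
  · obtain ⟨k, hkK, hkI⟩ := Finset.not_subset.mp hKsub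
    have hone : 1 ≤ ((K ∩ {j}).card : ℝ) + ((K \ (S ∪ {i} ∪ {j})).card : ℝ) := by
      by_cases hkj : k = j
      · have : 0 < (K ∩ ({j} : Finset (Fin n))).card :=
          Finset.card_pos.mpr ⟨k, Finset.mem_inter.mpr ⟨hkK, by simp [hkj]⟩⟩
        have : (1:ℝ) ≤ ((K ∩ ({j} : Finset (Fin n))).card : ℝ) := by exact_mod_cast this
        linarith
      · have hmem : k ∈ K \ (S ∪ {i} ∪ {j}) := by
          rw [Finset.mem_sdiff]
          refine ⟨hkK, ?_⟩
          intro hc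
          rcases Finset.mem_union.mp hc with hc1 | hc2
          · rcases Finset.mem_union.mp hc1 with hc3 | hc4
            · exact hkI (Finset.mem_insert_of_mem hc3)
            · rw [Finset.mem_singleton] at hc4
              rw [hc4] at hkI
              exact hkI (Finset.mem_insert_self _ _)
          · rw [Finset.mem_singleton] at hc2
            exact hkj hc2
        have : 0 < (K \ (S ∪ {i} ∪ {j})).card := Finset.card_pos.mpr ⟨k, hmem⟩
        have : (1:ℝ) ≤ ((K \ (S ∪ {i} ∪ {j})).card : ℝ) := by exact_mod_cast this
        linarith
    have e1 : a * ((K ∩ S).card : ℝ) ≤ a * p :=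
      mul_le_mul_of_nonneg_left hmS ha0.le
    have e3 : a * p ≤ a * n := mul_le_mul_of_nonneg_left hpn ha0.le
    have e4 : M * 1 ≤ M * (((K ∩ {j}).card : ℝ) + ((K \ (S ∪ {i} ∪ {j})).card : ℝ)) :=
      mul_le_mul_of_nonneg_left hone hM0
    rw [mul_add] at e4
    linarith

lemma local_super {α : ℝ} {μ : Measure (Fin n → ℝ)} (h0 : h ∅ = 0) (hα : 0 < α)
    (hsurv : ∀ x : Fin n → ℝ,
      μ {y : Fin n → ℝ | ∀ i, x i ≤ y i} =
        ENNReal.ofReal (Real.exp (-(α * entPoly h x))))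
    {S : Finset (Fin n)} {i j : Fin n}
    (hi : i ∉ S) (hj : j ∉ S) (hij : i ≠ j)
    (hSfin : h S ≠ ⊤) (hUfin : h (insert j (insert i S)) ≠ ⊤) :
    hre h (insert i S) + hre h (insert j S) ≤ hre h S + hre h (insert j (insert i S)) := by
  have hH0 : 0 ≤ Hb h := Hb_nonneg h
  set b : ℝ := hre h (insert i S) - hre h S with hbdef
  set c : ℝ := hre h (insert j S) - hre h S with hcdef
  set E : ℝ := |b| + |c| with hEdef
  set a : ℝ := E + 2 * Hb h + 1 with hadef
  set M : ℝ := n * a + E + 2 * Hb h + 1 with hMdef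
  have hE0 : 0 ≤ E := by rw [hEdef]; positivity
  have hbE : |b| ≤ E := by rw [hEdef]; have := abs_nonneg c; linarith
  have hcE : |c| ≤ E := by rw [hEdef]; have := abs_nonneg b; linarith
  have ha0 : 0 < a := by rw [hadef]; linarith
  have hn0 : (0:ℝ) ≤ (n:ℝ) := Nat.cast_nonneg n
  have hna : (0:ℝ) ≤ (n:ℝ) * a := mul_nonneg hn0 ha0.le
  have hM0 : 0 ≤ M := by rw [hMdef]; linarith
  have hMb : -M ≤ b := by
    have := neg_abs_le b
    rw [hMdef]
    have : -E ≤ b := by have := neg_abs_le b; linarith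
    linarith
  have hMc : -M ≤ c := by
    have : -E ≤ c := by have := neg_abs_le c; linarith
    rw [hMdef]
    linarith
  set p : ℝ := (S.card : ℝ) with hp
  have hp0 : 0 ≤ p := by rw [hp]; exact Nat.cast_nonneg _
  have dCA : Disjoint S ({i} : Finset (Fin n)) := by
    simp [Finset.disjoint_singleton_right, hi]
  have dCB : Disjoint S ({j} : Finset (Fin n)) := by
    simp [Finset.disjoint_singleton_right, hj]
  have dAB : Disjoint ({i} : Finset (Fin n)) ({j} : Finset (Fin n)) := by
    simp only [Finset.disjoint_singleton_right, Finset.mem_singleton]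
    exact fun hc => hij hc.symm
  set x1 := vec4 S {i} {j} a b (-M) M with hx1
  set x2 := vec4 S {i} {j} a (-M) c M with hx2
  have hinf : x1 ⊓ x2 = vec4 S {i} {j} a (-M) (-M) M := by
    have m1 : min b (-M) = -M := min_eq_right hMb
    have m2 : min (-M) c = -M := min_eq_left hMc
    rw [hx1, hx2, vec4_inf, m1, m2]
  have hsup : x1 ⊔ x2 = vec4 S {i} {j} a b c M := by
    have m1 : max b (-M) = b := max_eq_left hMb
    have m2 : max (-M) c = c := max_eq_right hMc
    rw [hx1, hx2, vec4_sup, m1, m2]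
  have bound1 : entPoly h x1 ≤ a * p - hre h S := by
    rw [hx1]
    exact philoc h h0 hi hj hij hE0 hbE hcE hadef hMdef (by rw [hbdef]; linarith)
  have bound2 : entPoly h x2 ≤ a * p - hre h S := by
    have hcomm : x2 = vec4 S {j} {i} a c (-M) M := by
      rw [hx2, vec4_comm S dAB]
    rw [hcomm]
    exact philoc h h0 hj hi (fun hc => hij hc.symm) hE0 hcE hbE hadef hMdef
      (by rw [hcdef]; linarith)
  have bound0 : a * p - hre h S ≤ entPoly h (x1 ⊓ x2) := by
    rw [hinf]
    have := le_entPoly h hSfin (vec4 S {i} {j} a (-M) (-M) M)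
    rw [sum_vec4 dCA dCB dAB] at this
    have h1 : S ∩ S = S := Finset.inter_self S
    have h2 : S ∩ ({i} : Finset (Fin n)) = ∅ := Finset.disjoint_iff_inter_eq_empty.mp dCA
    have h3 : S ∩ ({j} : Finset (Fin n)) = ∅ := Finset.disjoint_iff_inter_eq_empty.mp dCB
    have h4 : S \ (S ∪ {i} ∪ {j}) = ∅ := by
      apply Finset.sdiff_eq_empty_iff_subset.mpr
      intro s hs
      simp [hs]
    rw [h1, h2, h3, h4] at this
    simpa [hp] using this
  have bound3 : a * p + b + c - hre h (insert j (insert i S)) ≤ entPoly h (x1 ⊔ x2) := by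
    rw [hsup]
    have := le_entPoly h hUfin (vec4 S {i} {j} a b c M)
    rw [sum_vec4 dCA dCB dAB] at this
    set U := insert j (insert i S) with hU
    have hiU : i ∈ U := by simp [hU]
    have hjU : j ∈ U := by simp [hU]
    have hSU : S ⊆ U := by
      intro s hs
      simp [hU, hs]
    have h1 : U ∩ S = S := Finset.inter_eq_right.mpr hSU
    have h2 : U ∩ ({i} : Finset (Fin n)) = {i} := by
      apply Finset.inter_eq_right.mpr
      intro k hk
      rw [Finset.mem_singleton] at hk
      rw [hk]; exact hiU
    have h3 : U ∩ ({j} : Finset (Fin n)) = {j} := by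
      apply Finset.inter_eq_right.mpr
      intro k hk
      rw [Finset.mem_singleton] at hk
      rw [hk]; exact hjU
    have h4 : U \ (S ∪ {i} ∪ {j}) = ∅ := by
      apply Finset.sdiff_eq_empty_iff_subset.mpr
      intro u hu
      rcases Finset.mem_insert.mp hu with rfl | hu2
      · simp
      · rcases Finset.mem_insert.mp hu2 with rfl | hu3
        · simp
        · simp [hu3]
    rw [h1, h2, h3, h4] at this
    simp only [Finset.card_singleton, Nat.cast_one, mul_one, Finset.card_empty,
      Nat.cast_zero, mul_zero, sub_zero] at this
    simpa [hp] using this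
  have hrect := rect h hsurv x1 x2
  have hlow1 : Real.exp (-(α * (a * p - hre h S))) ≤ Real.exp (-(α * entPoly h x1)) :=
    exp_antitone hα.le bound1
  have hlow2 : Real.exp (-(α * (a * p - hre h S))) ≤ Real.exp (-(α * entPoly h x2)) :=
    exp_antitone hα.le bound2
  have hup0 : Real.exp (-(α * entPoly h (x1 ⊓ x2))) ≤ Real.exp (-(α * (a * p - hre h S))) :=
    exp_antitone hα.le bound0
  have hup3 : Real.exp (-(α * entPoly h (x1 ⊔ x2))) ≤
      Real.exp (-(α * (a * p + b + c - hre h (insert j (insert i S))))) :=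
    exp_antitone hα.le bound3
  have hfinal : Real.exp (-(α * (a * p - hre h S))) ≤
      Real.exp (-(α * (a * p + b + c - hre h (insert j (insert i S))))) := by
    linarith
  have h1 := Real.exp_le_exp.mp hfinal
  have h2 : α * (a * p + b + c - hre h (insert j (insert i S))) ≤
      α * (a * p - hre h S) := by linarith
  have h3 := (mul_le_mul_iff_right₀ hα).mp h2
  rw [hbdef, hcdef] at h3
  linarith

lemma finite_interval {α : ℝ} {μ : Measure (Fin n → ℝ)} (h0 : h ∅ = 0) (hα : 0 < α)
    (hsurv : ∀ x : Fin n → ℝ,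
      μ {y : Fin n → ℝ | ∀ i, x i ≤ y i} =
        ENNReal.ofReal (Real.exp (-(α * entPoly h x))))
    {C U : Finset (Fin n)} (hCfin : h C ≠ ⊤) (hUfin : h U ≠ ⊤) :
    ∀ K : Finset (Fin n), C ⊆ K → K ⊆ U → h K ≠ ⊤ := by
  suffices main : ∀ d : ℕ, ∀ K : Finset (Fin n),
      (K \ C).card ≤ d → C ⊆ K → K ⊆ U → h K ≠ ⊤ by
    intro K h1 h2
    exact main (K \ C).card K le_rfl h1 h2
  intro d
  induction d with
  | zero =>
    intro K hd hCK hKU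
    have he : K \ C = ∅ := Finset.card_eq_zero.mp (Nat.le_zero.mp hd)
    have h2 : K ⊆ C := Finset.sdiff_eq_empty_iff_subset.mp he
    have h3 : K = C := subset_antisymm h2 hCK
    rw [h3]; exact hCfin
  | succ d ih =>
    intro K hd hCK hKU
    by_cases hKC : K ⊆ C
    · have h3 : K = C := subset_antisymm hKC hCK
      rw [h3]; exact hCfin
    · obtain ⟨k, hkK, hkC⟩ := Finset.not_subset.mp hKC
      have hCK' : C ⊆ K.erase k := fun x hx =>
        Finset.mem_erase.mpr ⟨fun he => hkC (he ▸ hx), hCK hx⟩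
      have hK'U : K.erase k ⊆ U := (Finset.erase_subset k K).trans hKU
      have hsd : (K.erase k) \ C = (K \ C).erase k := by
        ext x
        simp only [Finset.mem_erase, Finset.mem_sdiff]
        tauto
      have hkKC : k ∈ K \ C := Finset.mem_sdiff.mpr ⟨hkK, hkC⟩
      have hcard : ((K.erase k) \ C).card ≤ d := by
        rw [hsd, Finset.card_erase_of_mem hkKC]
        omega
      have hfin' := ih (K.erase k) hcard hCK' hK'U
      have hins : insert k (K.erase k) = K := Finset.insert_erase hkK
      have hnot : k ∉ K.erase k := Finset.notMem_erase k K
      have := up h h0 hα hsurv hnot (by rw [hins]; exact hKU) hfin' hUfin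
      rw [hins] at this
      exact this

lemma global {α : ℝ} {μ : Measure (Fin n → ℝ)} (h0 : h ∅ = 0) (hα : 0 < α)
    (hsurv : ∀ x : Fin n → ℝ,
      μ {y : Fin n → ℝ | ∀ i, x i ≤ y i} =
        ENNReal.ofReal (Real.exp (-(α * entPoly h x)))) :
    ∀ d : ℕ, ∀ I J : Finset (Fin n),
      (I \ J).card + (J \ I).card ≤ d → h (I ∩ J) ≠ ⊤ → h (I ∪ J) ≠ ⊤ →
      hre h I + hre h J ≤ hre h (I ∩ J) + hre h (I ∪ J) := by
  intro d
  induction d with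
  | zero =>
    intro I J hd _ _
    have h1 : I \ J = ∅ := Finset.card_eq_zero.mp (by omega)
    have h2 : J \ I = ∅ := Finset.card_eq_zero.mp (by omega)
    have hIJ : I = J :=
      subset_antisymm (Finset.sdiff_eq_empty_iff_subset.mp h1)
        (Finset.sdiff_eq_empty_iff_subset.mp h2)
    subst hIJ
    rw [Finset.inter_self, Finset.union_self]
  | succ d ih =>
    intro I J hd hC hU
    by_cases h1 : I \ J = ∅
    · have hsub : I ⊆ J := Finset.sdiff_eq_empty_iff_subset.mp h1
      rw [Finset.inter_eq_left.mpr hsub, Finset.union_eq_right.mpr hsub]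
    · by_cases h2 : J \ I = ∅
      · have hsub : J ⊆ I := Finset.sdiff_eq_empty_iff_subset.mp h2
        rw [Finset.inter_eq_right.mpr hsub, Finset.union_eq_left.mpr hsub]
        linarith
      · by_cases h3 : (I \ J).card = 1 ∧ (J \ I).card = 1
        · obtain ⟨i, hi⟩ := Finset.card_eq_one.mp h3.1
          obtain ⟨j, hj⟩ := Finset.card_eq_one.mp h3.2
          have hiIJ : i ∈ I \ J := by rw [hi]; simp
          have hjJI : j ∈ J \ I := by rw [hj]; simp
          rw [Finset.mem_sdiff] at hiIJ hjJI
          have hij : i ≠ j := fun he => hjJI.2 (he ▸ hiIJ.1)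
          have hiS : i ∉ I ∩ J := fun hc => hiIJ.2 (Finset.mem_inter.mp hc).2
          have hjS : j ∉ I ∩ J := fun hc => hjJI.2 (Finset.mem_inter.mp hc).1
          have hIeq : I = insert i (I ∩ J) := by
            ext x
            simp only [Finset.mem_insert, Finset.mem_inter]
            constructor
            · intro hx
              by_cases hxJ : x ∈ J
              · exact Or.inr ⟨hx, hxJ⟩
              · left
                have : x ∈ I \ J := Finset.mem_sdiff.mpr ⟨hx, hxJ⟩
                rw [hi] at this
                simpa using this
            · rintro (rfl | ⟨hx, _⟩)
              · exact hiIJ.1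
              · exact hx
          have hJeq : J = insert j (I ∩ J) := by
            ext x
            simp only [Finset.mem_insert, Finset.mem_inter]
            constructor
            · intro hx
              by_cases hxI : x ∈ I
              · exact Or.inr ⟨hxI, hx⟩
              · left
                have : x ∈ J \ I := Finset.mem_sdiff.mpr ⟨hx, hxI⟩
                rw [hj] at this
                simpa using this
            · rintro (rfl | ⟨_, hx⟩)
              · exact hjJI.1
              · exact hx
          have hUeq : I ∪ J = insert j (insert i (I ∩ J)) := by
            ext x
            simp only [Finset.mem_union, Finset.mem_insert, Finset.mem_inter]
            constructor
            · rintro (hx | hx)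
              · by_cases hxJ : x ∈ J
                · exact Or.inr (Or.inr ⟨hx, hxJ⟩)
                · have : x ∈ I \ J := Finset.mem_sdiff.mpr ⟨hx, hxJ⟩
                  rw [hi] at this
                  exact Or.inr (Or.inl (by simpa using this))
              · by_cases hxI : x ∈ I
                · exact Or.inr (Or.inr ⟨hxI, hx⟩)
                · have : x ∈ J \ I := Finset.mem_sdiff.mpr ⟨hx, hxI⟩
                  rw [hj] at this
                  exact Or.inl (by simpa using this)
            · rintro (rfl | rfl | ⟨hx, _⟩)
              · exact Or.inr hjJI.1
              · exact Or.inl hiIJ.1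
              · exact Or.inl hx
          have := local_super h h0 hα hsurv hiS hjS hij hC (by rw [← hUeq]; exact hU)
          rw [← hUeq, ← hIeq, ← hJeq] at this
          linarith
        · -- one side has ≥ 2 elements
          have step : ∀ I J : Finset (Fin n), 2 ≤ (I \ J).card →
              (I \ J).card + (J \ I).card ≤ d + 1 → h (I ∩ J) ≠ ⊤ → h (I ∪ J) ≠ ⊤ →
              hre h I + hre h J ≤ hre h (I ∩ J) + hre h (I ∪ J) := by
            intro I J hc2 hcd hCf hUf
            obtain ⟨i, hiIJ⟩ := Finset.card_pos.mp (by omega : 0 < (I \ J).card)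
            rw [Finset.mem_sdiff] at hiIJ
            obtain ⟨hiI, hiJ⟩ := hiIJ
            set I' := I.erase i with hI'
            have hI'I : I' ⊆ I := Finset.erase_subset i I
            have e1 : I' ∩ J = I ∩ J := by
              ext x
              simp only [hI', Finset.mem_inter, Finset.mem_erase]
              constructor
              · rintro ⟨⟨_, hx⟩, hxJ⟩
                exact ⟨hx, hxJ⟩
              · rintro ⟨hxI, hxJ⟩
                exact ⟨⟨fun he => hiJ (he ▸ hxJ), hxI⟩, hxJ⟩
            have e2 : I ∩ (I' ∪ J) = I' := by
              ext x
              simp only [hI', Finset.mem_inter, Finset.mem_union, Finset.mem_erase]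
              constructor
              · rintro ⟨hxI, hx | hx⟩
                · exact hx
                · exact ⟨fun he => hiJ (he ▸ hx), hxI⟩
              · rintro ⟨hne, hxI⟩
                exact ⟨hxI, Or.inl ⟨hne, hxI⟩⟩
            have e3 : I ∪ (I' ∪ J) = I ∪ J := by
              ext x
              simp only [hI', Finset.mem_union, Finset.mem_erase]
              tauto
            have hI'Jsub1 : I ∩ J ⊆ I' ∪ J := fun x hx =>
              Finset.mem_union_right _ (Finset.mem_inter.mp hx).2
            have hI'Jsub2 : I' ∪ J ⊆ I ∪ J :=
              Finset.union_subset (hI'I.trans Finset.subset_union_left)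
                Finset.subset_union_right
            have hI'Ufin : h (I' ∪ J) ≠ ⊤ :=
              finite_interval h h0 hα hsurv hCf hUf (I' ∪ J) hI'Jsub1 hI'Jsub2
            have hI'sub1 : I ∩ J ⊆ I' := fun x hx => by
              rcases Finset.mem_inter.mp hx with ⟨hxI, hxJ⟩
              exact Finset.mem_erase.mpr ⟨fun he => hiJ (he ▸ hxJ), hxI⟩
            have hI'fin : h I' ≠ ⊤ :=
              finite_interval h h0 hα hsurv hCf hUf I' hI'sub1
                (hI'I.trans Finset.subset_union_left)
            have c1 : (I' \ J).card + (J \ I').card ≤ d := by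
              have d1 : I' \ J = (I \ J).erase i := by
                ext x
                simp only [hI', Finset.mem_sdiff, Finset.mem_erase]
                tauto
              have d2 : J \ I' = J \ I := by
                ext x
                simp only [hI', Finset.mem_sdiff, Finset.mem_erase]
                constructor
                · rintro ⟨hxJ, hx⟩
                  refine ⟨hxJ, fun hxI => hx ⟨fun he => hiJ (he ▸ hxJ), hxI⟩⟩
                · rintro ⟨hxJ, hxI⟩
                  exact ⟨hxJ, fun hc => hxI hc.2⟩
              rw [d1, d2, Finset.card_erase_of_mem (Finset.mem_sdiff.mpr ⟨hiI, hiJ⟩)]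
              omega
            have IH1 := ih I' J c1 (by rw [e1]; exact hCf)
              (by
                have : I' ∪ J = I' ∪ J := rfl
                exact hI'Ufin)
            rw [e1] at IH1
            have c2 : (I \ (I' ∪ J)).card + ((I' ∪ J) \ I).card ≤ d := by
              have d1 : I \ (I' ∪ J) = {i} := by
                ext x
                simp only [hI', Finset.mem_sdiff, Finset.mem_union, Finset.mem_erase,
                  Finset.mem_singleton]
                constructor
                · rintro ⟨hxI, hx⟩
                  push_neg at hx
                  by_contra hne
                  exact (hx.1 hne) hxI
                · rintro rfl
                  refine ⟨hiI, ?_⟩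
                  push_neg
                  exact ⟨fun h' => absurd rfl h', hiJ⟩
              have d2 : (I' ∪ J) \ I = J \ I := by
                ext x
                simp only [hI', Finset.mem_sdiff, Finset.mem_union, Finset.mem_erase]
                tauto
              rw [d1, d2, Finset.card_singleton]
              omega
            have IH2 := ih I (I' ∪ J) c2 (by rw [e2]; exact hI'fin) (by rw [e3]; exact hUf)
            rw [e2, e3] at IH2
            linarith
          have hcase : 2 ≤ (I \ J).card ∨ 2 ≤ (J \ I).card := by
            have n1 : 1 ≤ (I \ J).card := Finset.card_pos.mpr (Finset.nonempty_of_ne_empty h1)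
            have n2 : 1 ≤ (J \ I).card := Finset.card_pos.mpr (Finset.nonempty_of_ne_empty h2)
            omega
          rcases hcase with hA | hB
          · exact step I J hA hd hC hU
          · have := step J I hB (by omega)
              (by rw [Finset.inter_comm]; exact hC)
              (by rw [Finset.union_comm]; exact hU)
            rw [Finset.inter_comm J I, Finset.union_comm J I] at this
            linarith

end SurvSuper

/-- **Survival functions force supermodularity (Proposition 4.2).** Let `h` be a
function from subsets of `[n]` to `ℝ ∪ {∞}` with `h_∅ = 0`. If for some `α > 0` the
function `x ↦ exp(−α φ_h(x))` is the survival function of a Borel probability measure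
on `ℝ^n`, then `h` is supermodular: `h_I + h_J ≤ h_{I∩J} + h_{I∪J}` for all `I, J`. -/
theorem supermodular_of_survival_function
    {n : ℕ} (hn : 1 ≤ n) (h : Finset (Fin n) → WithTop ℝ) (h0 : h ∅ = 0)
    (α : ℝ) (hα : 0 < α) (μ : Measure (Fin n → ℝ)) [IsProbabilityMeasure μ]
    (hsurv : ∀ x : Fin n → ℝ,
      μ {y : Fin n → ℝ | ∀ i, x i ≤ y i} =
        ENNReal.ofReal (Real.exp (-(α * entPoly h x)))) :
    ∀ I J : Finset (Fin n), h I + h J ≤ h (I ∩ J) + h (I ∪ J) := by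
  intro I J
  by_cases hC : h (I ∩ J) = ⊤
  · rw [hC, top_add]
    exact le_top
  by_cases hU : h (I ∪ J) = ⊤
  · rw [hU, add_top]
    exact le_top
  have hIfin : h I ≠ ⊤ :=
    SurvSuper.finite_interval h h0 hα hsurv hC hU I Finset.inter_subset_left
      Finset.subset_union_left
  have hJfin : h J ≠ ⊤ :=
    SurvSuper.finite_interval h h0 hα hsurv hC hU J Finset.inter_subset_right
      Finset.subset_union_right
  have key := SurvSuper.global h h0 hα hsurv ((I \ J).card + (J \ I).card) I J le_rfl hC hU
  calc h I + h J = ((SurvSuper.hre h I + SurvSuper.hre h J : ℝ) : WithTop ℝ) := by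
        rw [WithTop.coe_add, SurvSuper.coe_hre h hIfin, SurvSuper.coe_hre h hJfin]
    _ ≤ ((SurvSuper.hre h (I ∩ J) + SurvSuper.hre h (I ∪ J) : ℝ) : WithTop ℝ) :=
        WithTop.coe_le_coe.mpr key
    _ = h (I ∩ J) + h (I ∪ J) := by
        rw [WithTop.coe_add, SurvSuper.coe_hre h hC, SurvSuper.coe_hre h hU]

end
end
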